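/- arXiv:2403.11068 — 3 statements merged into one kernel-verified Lean document; each statement's English description precedes it below -/
import Mathlib

section
/- Consider a discrete-time DER control system with C ≥ 1 controllable buses. Let R, X ∈ ℝ^{C×C} be symmetric positive definite matrices, let v̂ ∈ ℝ^C be fixed, and for each n ∈ {1,…,C} let γ_n, ξ_n : ℝ → ℝ be differentiable with −L_p ≤ γ_n'(v) ≤ 0 and −L_q ≤ ξ_n'(v) ≤ 0 for all v ∈ ℝ. Fix α ≥ 0 and set X̂ := X − αR. Consider the dynamics p_n(t+1) = (1−ε)p_n(t) + ε γ_n(v_n(t)), q_n(t+1) = (1−ε)q_n(t) + ε ξ_n(v_n(t)), where v(t) = R p(t) + X q(t) + v̂. If L_q < 1/(κ(R^{1/2}) · ‖X̂‖) and 0 < ε < min{1, 2/(1 + κ(R^{1/2}) L_q ‖X̂‖ + (L_p + α L_q) ‖R‖)}, then this system has a unique equilibrium point (p*, q*), and for every initial condition (p(0), q(0)) the trajectory (p(t), q(t)) converges to (p*, q*) as t → ∞. -/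
open Matrix Filter Topology

/-- The operator norm on real `C × C` matrices induced by the Euclidean (ℓ2) vector norm. -/
noncomputable def opNorm {C : ℕ} (A : Matrix (Fin C) (Fin C) ℝ) : ℝ :=
  ‖(Matrix.toEuclideanCLM (𝕜 := ℝ) A : EuclideanSpace ℝ (Fin C) →L[ℝ] EuclideanSpace ℝ (Fin C))‖

/-- Condition number `κ(A) = ‖A‖ ‖A⁻¹‖`. -/
noncomputable def condNumber {C : ℕ} (A : Matrix (Fin C) (Fin C) ℝ) : ℝ :=
  opNorm A * opNorm A⁻¹

/-!
Along a trajectory the voltages `v = R p + X q + v̂` evolve on their own, `v(t+1) = F(v(t))`.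
By the mean value theorem `F v - F v' = ((1 - ε) I - ε (R D_p + X D_q)) (v - v')` with diagonal
`D_p`, `D_q` whose entries lie in `[0, L_p]`, `[0, L_q]`. Writing `X = X̂ + α R` and conjugating
by `S = R^{1/2}` turns this matrix into `(1 - ε) I - ε S (D_p + α D_q) S - ε S⁻¹ X̂ D_q S`. The
first part relaxes a cocoercive symmetric operator and has norm at most
`max (1 - ε) (ε (1 + (L_p + α L_q) ‖R‖) - 1)`; the second has norm at most `ε κ(S) L_q ‖X̂‖`;
the step-size condition makes the sum smaller than one. Hence `F` is a contraction for the norm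
`‖S⁻¹ ·‖`, its fixed point `v*` yields the unique equilibrium `(γ(v*), ξ(v*))`, and `p`, `q`
converge because `p(t+1) = (1 - ε) p(t) + ε γ(v(t))` with `γ(v(t)) → γ(v*)`.
-/

open Set
open scoped RealInnerProductSpace Matrix.Norms.L2Operator

theorem exists_mem_Icc_sub_eq_neg_mul {f : ℝ → ℝ} {L : ℝ} (hf : Differentiable ℝ f)
    (hf' : ∀ x, deriv f x ∈ Icc (-L) 0) (a b : ℝ) :
    ∃ d ∈ Icc 0 L, f a - f b = -(d * (a - b)) := by
  have key : ∀ {x y}, x < y → ∃ d ∈ Icc 0 L, f y - f x = -(d * (y - x)) := by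
    intro x y hxy
    obtain ⟨c, -, hc⟩ := exists_deriv_eq_slope f hxy hf.continuous.continuousOn
      hf.differentiableOn
    refine ⟨-deriv f c, ⟨by linarith [(hf' c).2], by linarith [(hf' c).1]⟩, ?_⟩
    rw [hc]
    field_simp [sub_ne_zero.2 hxy.ne']
  rcases lt_trichotomy a b with h | rfl | h
  · obtain ⟨d, hd, he⟩ := key h
    exact ⟨d, hd, by linarith⟩
  · exact ⟨0, ⟨le_rfl, by linarith [(hf' a).1, (hf' a).2]⟩, by ring⟩
  · exact key h

theorem tendsto_zero_of_le_mul_add {r : ℝ} (hr0 : 0 ≤ r) (hr1 : r < 1) {a β : ℕ → ℝ}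
    (ha : ∀ t, 0 ≤ a t) (hrec : ∀ t, a (t + 1) ≤ r * a t + β t)
    (hβ : Tendsto β atTop (𝓝 0)) : Tendsto a atTop (𝓝 0) := by
  refine tendsto_order.2 ⟨fun x hx ↦ .of_forall fun t ↦ hx.trans_le (ha t), fun δ hδ ↦ ?_⟩
  obtain ⟨T, hT⟩ := eventually_atTop.1
    (hβ.eventually (gt_mem_nhds (show 0 < (1 - r) * (δ / 2) by nlinarith)))
  -- beyond `T`, the excess of `a` over `δ / 2` decays geometrically
  have hdecay : ∀ k, a (T + k) - δ / 2 ≤ r ^ k * (a T - δ / 2) := by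
    intro k
    induction k with
    | zero => simp
    | succ k ih =>
      calc a (T + k + 1) - δ / 2 ≤ r * (a (T + k) - δ / 2) := by
            linarith [hrec (T + k), hT (T + k) (by omega)]
        _ ≤ r * (r ^ k * (a T - δ / 2)) := mul_le_mul_of_nonneg_left ih hr0
        _ = r ^ (k + 1) * (a T - δ / 2) := by ring
  have hpow : Tendsto (fun k ↦ r ^ k * (a T - δ / 2)) atTop (𝓝 0) := by
    simpa using (tendsto_pow_atTop_nhds_zero_of_lt_one hr0 hr1).mul_const (a T - δ / 2)
  obtain ⟨K, hK⟩ := eventually_atTop.1 (hpow.eventually (gt_mem_nhds (half_pos hδ)))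
  refine eventually_atTop.2 ⟨T + K, fun t ht ↦ ?_⟩
  obtain ⟨k, rfl⟩ := Nat.exists_eq_add_of_le (le_of_add_le_left ht)
  linarith [hdecay k, hK k (by omega)]

theorem tendsto_of_relaxation {E : Type*} [NormedAddCommGroup E] [NormedSpace ℝ E] {ε : ℝ}
    (hε : |1 - ε| < 1) {u b : ℕ → E} {c : E} (hu : ∀ t, u (t + 1) = (1 - ε) • u t + ε • b t)
    (hb : Tendsto b atTop (𝓝 c)) : Tendsto u atTop (𝓝 c) := by
  rw [tendsto_iff_norm_sub_tendsto_zero] at hb ⊢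
  refine tendsto_zero_of_le_mul_add (abs_nonneg _) hε (fun t ↦ norm_nonneg _) (fun t ↦ ?_)
    (by simpa using hb.const_mul ‖ε‖)
  calc ‖u (t + 1) - c‖ = ‖(1 - ε) • (u t - c) + ε • (b t - c)‖ := by
        rw [hu]; congr 1; module
    _ ≤ |1 - ε| * ‖u t - c‖ + ‖ε‖ * ‖b t - c‖ := by
        grw [norm_add_le, norm_smul, norm_smul, Real.norm_eq_abs]

theorem eq_of_eq_one_sub_smul_add_smul {E : Type*} [AddCommGroup E] [Module ℝ E] {ε : ℝ}
    (hε : ε ≠ 0) {x y : E} (h : x = (1 - ε) • x + ε • y) : x = y := by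
  have : ε • (y - x) = 0 := by linear_combination (norm := module) -h
  exact (sub_eq_zero.1 ((smul_eq_zero.1 this).resolve_left hε)).symm

theorem exists_isFixedPt_tendsto_of_conj {α β : Type*} [TopologicalSpace α]
    [MetricSpace β] [CompleteSpace β] [Nonempty β] (e : β ≃ α) (he : Continuous e)
    {F : α → α} {K : NNReal} (hF : ContractingWith K (e.symm ∘ F ∘ e)) :
    ∃ x, Function.IsFixedPt F x ∧ (∀ y, Function.IsFixedPt F y → y = x) ∧
      ∀ u : ℕ → α, (∀ t, u (t + 1) = F (u t)) → Tendsto u atTop (𝓝 x) := by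
  have hconj : Function.Semiconj e (e.symm ∘ F ∘ e) F := fun b ↦ by simp
  refine ⟨e hF.fixedPoint, hconj.mapsTo_fixedPoints hF.fixedPoint_isFixedPt, fun y hy ↦ ?_,
    fun u hu ↦ ?_⟩
  · rw [← e.apply_symm_apply y, hF.fixedPoint_unique (x := e.symm y)
      (by simp [Function.IsFixedPt, hy.eq])]
  · have horbit : ∀ t, u t = F^[t] (u 0) := fun t ↦ by
      induction t with
      | zero => rfl
      | succ t ih => rw [hu, ih, Function.iterate_succ_apply']
    refine ((he.tendsto _).comp (hF.tendsto_iterate_fixedPoint (e.symm (u 0)))).congr fun t ↦ ?_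
    rw [Function.comp_apply, (hconj.iterate_right t).eq, e.apply_symm_apply]
    exact (horbit t).symm

/-- For `0 ≤ B` this is `max |1 - ε| |1 - ε (1 + B)|`, the norm of `(1 - ε) I - ε M` for a
symmetric `M` with spectrum in `[0, B]`. -/
noncomputable def relaxationFactor (ε B : ℝ) : ℝ :=
  max (1 - ε) (ε * (1 + B) - 1)

theorem relaxationFactor_nonneg {ε B : ℝ} (hB : 0 ≤ B) : 0 ≤ relaxationFactor ε B := by
  rcases le_total ε 1 with h | h
  · exact le_max_of_le_left (by linarith)
  · exact le_max_of_le_right (by nlinarith)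

theorem relaxationFactor_add_mul_lt_one {ε k x Lq b : ℝ} (hkx : 0 ≤ k * x) (hε0 : 0 < ε)
    (hLq : Lq < 1 / (k * x)) (hε : ε < 2 / (1 + k * Lq * x + b)) :
    relaxationFactor ε b + ε * (k * Lq * x) < 1 := by
  have hden : 0 < 1 + k * Lq * x + b := by
    by_contra! h
    exact hε.not_ge ((div_nonpos_of_nonneg_of_nonpos zero_le_two h).trans hε0.le)
  have ha : k * Lq * x < 1 := by
    rw [show k * Lq * x = k * x * Lq by ring]
    rcases hkx.eq_or_lt with h | h
    · rw [← h, zero_mul]; exact one_pos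
    · exact (lt_div_iff₀' h).1 hLq
  have h2 := (lt_div_iff₀ hden).1 hε
  have := max_lt (show 1 - ε < 1 - ε * (k * Lq * x) by nlinarith)
    (show ε * (1 + b) - 1 < 1 - ε * (k * Lq * x) by linarith)
  unfold relaxationFactor
  linarith

section InnerProduct

variable {E : Type*} [NormedAddCommGroup E] [InnerProductSpace ℝ E]

theorem norm_le_mul_of_sq_norm_le_mul_inner {B : ℝ} (hB : 0 ≤ B) {x y : E}
    (hy : ‖y‖ ^ 2 ≤ B * ⟪y, x⟫) : ‖y‖ ≤ B * ‖x‖ := by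
  have : ‖y‖ * ‖y‖ ≤ ‖y‖ * (B * ‖x‖) := by
    nlinarith [real_inner_le_norm y x]
  rcases (norm_nonneg y).eq_or_lt with h | h
  · rw [← h]; positivity
  · exact le_of_mul_le_mul_left this h

theorem inner_nonneg_of_sq_norm_le_mul_inner {B : ℝ} (hB : 0 ≤ B) {x y : E}
    (hy : ‖y‖ ^ 2 ≤ B * ⟪y, x⟫) : 0 ≤ ⟪y, x⟫ := by
  by_contra! h
  have : y = 0 := by
    rw [← norm_eq_zero]; nlinarith [norm_nonneg y]
  simp [this] at h

theorem norm_one_sub_smul_sub_smul_le {B ε : ℝ} (hB : 0 ≤ B) (hε : 0 < ε) {x y : E}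
    (hy : ‖y‖ ^ 2 ≤ B * ⟪y, x⟫) :
    ‖(1 - ε) • x - ε • y‖ ≤ relaxationFactor ε B * ‖x‖ := by
  set ρ := relaxationFactor ε B
  set t := ⟪y, x⟫
  have ht0 : 0 ≤ t := inner_nonneg_of_sq_norm_le_mul_inner hB hy
  have htB : t ≤ B * ‖x‖ ^ 2 := by
    nlinarith [real_inner_le_norm y x, norm_le_mul_of_sq_norm_le_mul_inner hB hy, norm_nonneg x]
  have h₁ : 1 - ε ≤ ρ := le_max_left _ _
  have h₂ : ε * (1 + B) - 1 ≤ ρ := le_max_right _ _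
  have hexpand : ‖(1 - ε) • x - ε • y‖ ^ 2
      = (1 - ε) ^ 2 * ‖x‖ ^ 2 - 2 * (1 - ε) * ε * t + ε ^ 2 * ‖y‖ ^ 2 := by
    rw [norm_sub_sq_real, inner_smul_left, inner_smul_right, real_inner_comm, norm_smul,
      norm_smul, Real.norm_eq_abs, Real.norm_eq_abs, mul_pow, mul_pow, sq_abs, sq_abs]
    simp only [RCLike.conj_to_real]
    ring
  -- with `‖y‖² ≤ B t` the bound is affine in `t ∈ [0, B ‖x‖²]`, so an endpoint decides
  have hsq : ‖(1 - ε) • x - ε • y‖ ^ 2 ≤ (ρ * ‖x‖) ^ 2 := by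
    rw [hexpand, mul_pow]
    have hy' : ε ^ 2 * ‖y‖ ^ 2 ≤ ε ^ 2 * (B * t) := by gcongr
    rcases le_total (ε * B) (2 * (1 - ε)) with h | h
    · have : (1 - ε) ^ 2 ≤ ρ ^ 2 := sq_le_sq' (by nlinarith [h₂]) h₁
      nlinarith [mul_nonneg (mul_nonneg hε.le ht0) (sub_nonneg.2 h), sq_nonneg ‖x‖]
    · have : (1 - ε - ε * B) ^ 2 ≤ ρ ^ 2 := sq_le_sq' (by linarith) (by nlinarith)
      nlinarith [mul_le_mul_of_nonneg_left htB (mul_nonneg hε.le (sub_nonneg.2 h)), sq_nonneg ‖x‖]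
  exact (pow_le_pow_iff_left₀ (norm_nonneg _)
    (mul_nonneg (relaxationFactor_nonneg hB) (norm_nonneg x)) two_ne_zero).1 hsq

theorem sq_norm_conj_le_mul_inner {L : ℝ} {S : E →L[ℝ] E}
    (hS : (S : E →ₗ[ℝ] E).IsSymmetric) {D : E → E} (hD : ∀ z, ‖D z‖ ^ 2 ≤ L * ⟪D z, z⟫)
    (x : E) : ‖S (D (S x))‖ ^ 2 ≤ L * ‖S‖ ^ 2 * ⟪S (D (S x)), x⟫ := by
  calc ‖S (D (S x))‖ ^ 2 ≤ (‖S‖ * ‖D (S x)‖) ^ 2 := by gcongr; exact S.le_opNorm _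
    _ ≤ ‖S‖ ^ 2 * (L * ⟪D (S x), S x⟫) := by rw [mul_pow]; gcongr; exact hD _
    _ = L * ‖S‖ ^ 2 * ⟪S (D (S x)), x⟫ := by
          rw [show ⟪S (D (S x)), x⟫ = ⟪D (S x), S x⟫ from hS _ _]; ring

end InnerProduct

section Matrix

variable {n : Type*} [Fintype n] [DecidableEq n]

theorem sq_norm_toEuclideanCLM_diagonal_le {d : n → ℝ} {L : ℝ} (hd : ∀ i, d i ∈ Icc 0 L)
    (x : EuclideanSpace ℝ n) :
    ‖toEuclideanCLM (𝕜 := ℝ) (diagonal d) x‖ ^ 2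
      ≤ L * ⟪toEuclideanCLM (𝕜 := ℝ) (diagonal d) x, x⟫ := by
  rw [EuclideanSpace.norm_sq_eq, real_inner_comm, inner_toEuclideanCLM, dotProduct,
    Finset.mul_sum]
  refine Finset.sum_le_sum fun i _ ↦ ?_
  simp only [ofLp_toEuclideanCLM, mulVec_diagonal, Real.norm_eq_abs, sq_abs]
  nlinarith [mul_nonneg (mul_nonneg (sub_nonneg.2 (hd i).2) (hd i).1) (sq_nonneg (x i))]

theorem norm_diagonal_le {d : n → ℝ} {L : ℝ} (hL : 0 ≤ L) (hd : ∀ i, d i ∈ Icc 0 L) :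
    ‖diagonal d‖ ≤ L := by
  rw [l2_opNorm_diagonal, pi_norm_le_iff_of_nonneg hL]
  exact fun i ↦ by rw [Real.norm_of_nonneg (hd i).1]; exact (hd i).2

theorem norm_relaxation_conj_diagonal_le {S : Matrix n n ℝ} (hS : S.IsHermitian) {d : n → ℝ}
    {L ε : ℝ} (hL : 0 ≤ L) (hd : ∀ i, d i ∈ Icc 0 L) (hε : 0 < ε) :
    ‖(1 - ε) • 1 - ε • (S * diagonal d * S)‖ ≤ relaxationFactor ε (L * ‖S * S‖) := by
  have hSS : ‖S * S‖ = ‖toEuclideanCLM (𝕜 := ℝ) S‖ ^ 2 := by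
    nth_rewrite 1 [← hS.eq]
    rw [l2_opNorm_conjTranspose_mul_self, sq]; rfl
  have hsym : (toEuclideanCLM (𝕜 := ℝ) S : EuclideanSpace ℝ n →ₗ[ℝ] _).IsSymmetric :=
    isSymmetric_toEuclideanLin_iff.2 hS
  rw [hSS, cstar_norm_def]
  refine ContinuousLinearMap.opNorm_le_bound _ (relaxationFactor_nonneg (by positivity))
    fun x ↦ ?_
  simpa using norm_one_sub_smul_sub_smul_le (by positivity) hε
    (sq_norm_conj_le_mul_inner hsym (sq_norm_toEuclideanCLM_diagonal_le hd) x)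

theorem norm_conj_linearization_le {S R X : Matrix n n ℝ} (hS : S.IsHermitian) (hSu : IsUnit S)
    (hSR : S * S = R) {dp dq : n → ℝ} {Lp Lq α ε : ℝ} (hLp : 0 ≤ Lp) (hLq : 0 ≤ Lq) (hα : 0 ≤ α)
    (hdp : ∀ i, dp i ∈ Icc 0 Lp) (hdq : ∀ i, dq i ∈ Icc 0 Lq) (hε : 0 < ε) :
    ‖S⁻¹ * ((1 - ε) • 1 - ε • (R * diagonal dp + X * diagonal dq)) * S‖
      ≤ relaxationFactor ε ((Lp + α * Lq) * ‖R‖) + ε * (‖S‖ * ‖S⁻¹‖ * Lq * ‖X - α • R‖) := by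
  have hinv : S⁻¹ * S = 1 := nonsing_inv_mul S ((isUnit_iff_isUnit_det S).1 hSu)
  -- split `X = (X - α R) + α R`: the `R`-part is symmetric after conjugation by `S`
  have hsplit : S⁻¹ * ((1 - ε) • 1 - ε • (R * diagonal dp + X * diagonal dq)) * S
      = ((1 - ε) • 1 - ε • (S * diagonal (dp + α • dq) * S))
        - ε • (S⁻¹ * (X - α • R) * diagonal dq * S) := by
    have hdiag : diagonal (dp + α • dq) = diagonal dp + α • diagonal dq := by
      rw [← diagonal_smul, diagonal_add]; rfl
    subst hSR
    simp only [hdiag, mul_sub, sub_mul, mul_add, add_mul, mul_smul_comm, smul_mul_assoc,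
      ← mul_assoc, hinv, one_mul, mul_one]
    module
  have hd : ∀ i, (dp + α • dq) i ∈ Icc 0 (Lp + α * Lq) := fun i ↦ by
    simp only [Pi.add_apply, Pi.smul_apply, smul_eq_mul]
    exact ⟨by nlinarith [(hdp i).1, (hdq i).1], by nlinarith [(hdp i).2, (hdq i).2]⟩
  rw [hsplit, ← hSR]
  refine (norm_sub_le _ _).trans (add_le_add
    (norm_relaxation_conj_diagonal_le hS (by positivity) hd hε) ?_)
  rw [norm_smul, Real.norm_of_nonneg hε.le]
  gcongr
  calc ‖S⁻¹ * (X - α • (S * S)) * diagonal dq * S‖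
      ≤ ‖S⁻¹‖ * ‖X - α • (S * S)‖ * ‖diagonal dq‖ * ‖S‖ := by
        grw [norm_mul_le, norm_mul_le, norm_mul_le]
    _ ≤ ‖S‖ * ‖S⁻¹‖ * Lq * ‖X - α • (S * S)‖ := by
        grw [norm_diagonal_le hLq hdq]; apply le_of_eq; ring

noncomputable def euclideanMulVecEquiv (S : Matrix n n ℝ) (hS : IsUnit S) :
    EuclideanSpace ℝ n ≃ (n → ℝ) where
  toFun m := S *ᵥ WithLp.ofLp m
  invFun v := WithLp.toLp 2 (S⁻¹ *ᵥ v)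
  left_inv m := by
    simp [mulVec_mulVec, nonsing_inv_mul S ((isUnit_iff_isUnit_det S).1 hS)]
  right_inv v := by
    simp [mulVec_mulVec, mul_nonsing_inv S ((isUnit_iff_isUnit_det S).1 hS)]

theorem continuous_euclideanMulVecEquiv (S : Matrix n n ℝ) (hS : IsUnit S) :
    Continuous (euclideanMulVecEquiv S hS) := by
  show Continuous fun m : EuclideanSpace ℝ n ↦ S *ᵥ WithLp.ofLp m
  fun_prop

theorem norm_euclideanMulVecEquiv_symm_sub_le (S N : Matrix n n ℝ) (hS : IsUnit S)
    {F : (n → ℝ) → n → ℝ} {m m' : EuclideanSpace ℝ n}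
    (hF : F (euclideanMulVecEquiv S hS m) - F (euclideanMulVecEquiv S hS m')
      = N *ᵥ (euclideanMulVecEquiv S hS m - euclideanMulVecEquiv S hS m')) :
    ‖(euclideanMulVecEquiv S hS).symm (F (euclideanMulVecEquiv S hS m))
      - (euclideanMulVecEquiv S hS).symm (F (euclideanMulVecEquiv S hS m'))‖
      ≤ ‖S⁻¹ * N * S‖ * ‖m - m'‖ := by
  convert l2_opNorm_mulVec (S⁻¹ * N * S) (m - m') using 2
  simp only [euclideanMulVecEquiv, Equiv.coe_fn_mk, Equiv.coe_fn_symm_mk] at hF ⊢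
  rw [← WithLp.toLp_sub, ← mulVec_sub, hF, ← mulVec_sub]
  simp [mulVec_mulVec, mul_assoc]

theorem exists_diagonal_sub_eq {f : n → ℝ → ℝ} {L : ℝ} (hfd : ∀ i, Differentiable ℝ (f i))
    (hf : ∀ i x, deriv (f i) x ∈ Icc (-L) 0) (v v' : n → ℝ) :
    ∃ d : n → ℝ, (∀ i, d i ∈ Icc 0 L) ∧
      (fun i ↦ f i (v i)) - (fun i ↦ f i (v' i)) = -(diagonal d *ᵥ (v - v')) := by
  choose d hd heq using fun i ↦ exists_mem_Icc_sub_eq_neg_mul (hfd i) (hf i) (v i) (v' i)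
  exact ⟨d, hd, funext fun i ↦ by simp [heq, mulVec_diagonal]⟩

end Matrix

section Voltage

variable {n : Type*} [Fintype n] {R X : Matrix n n ℝ} {vhat : n → ℝ} {γ ξ : n → ℝ → ℝ} {ε : ℝ}

/-- With `v(t) := R p(t) + X q(t) + v̂`, the dynamics of `(p, q)` read
`v(t + 1) = voltageStep R X v̂ γ ξ ε (v t)`. -/
noncomputable def voltageStep (R X : Matrix n n ℝ) (vhat : n → ℝ) (γ ξ : n → ℝ → ℝ) (ε : ℝ)
    (v : n → ℝ) : n → ℝ :=
  (1 - ε) • v + ε • (R *ᵥ (fun i ↦ γ i (v i)) + X *ᵥ (fun i ↦ ξ i (v i)) + vhat)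

theorem voltageStep_eq_self_iff (hε : ε ≠ 0) {v : n → ℝ} :
    voltageStep R X vhat γ ξ ε v = v
      ↔ R *ᵥ (fun i ↦ γ i (v i)) + X *ᵥ (fun i ↦ ξ i (v i)) + vhat = v := by
  refine ⟨fun h ↦ (eq_of_eq_one_sub_smul_add_smul hε h.symm).symm, fun h ↦ ?_⟩
  rw [voltageStep, h]
  module

theorem voltageStep_mulVec_add_mulVec_add {p q p' q' : n → ℝ}
    (hp : p' = (1 - ε) • p + ε • fun i ↦ γ i ((R *ᵥ p + X *ᵥ q + vhat) i))
    (hq : q' = (1 - ε) • q + ε • fun i ↦ ξ i ((R *ᵥ p + X *ᵥ q + vhat) i)) :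
    R *ᵥ p' + X *ᵥ q' + vhat = voltageStep R X vhat γ ξ ε (R *ᵥ p + X *ᵥ q + vhat) := by
  simp only [hp, hq, voltageStep, mulVec_add, mulVec_smul]
  module

theorem tendsto_of_relaxation_comp {f : n → ℝ → ℝ} (hf : ∀ i, Continuous (f i))
    (hε : |1 - ε| < 1) {u V : ℕ → n → ℝ} {v : n → ℝ}
    (hu : ∀ t i, u (t + 1) i = (1 - ε) * u t i + ε * f i (V t i))
    (hV : Tendsto V atTop (𝓝 v)) : Tendsto u atTop (𝓝 fun i ↦ f i (v i)) :=
  tendsto_of_relaxation hε (fun t ↦ funext (hu t))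
    (((continuous_pi fun i ↦ (hf i).comp (continuous_apply i)).tendsto v).comp hV)

variable [DecidableEq n]

theorem voltageStep_sub {dp dq v v' : n → ℝ}
    (hp : (fun i ↦ γ i (v i)) - (fun i ↦ γ i (v' i)) = -(diagonal dp *ᵥ (v - v')))
    (hq : (fun i ↦ ξ i (v i)) - (fun i ↦ ξ i (v' i)) = -(diagonal dq *ᵥ (v - v'))) :
    voltageStep R X vhat γ ξ ε v - voltageStep R X vhat γ ξ ε v'
      = ((1 - ε) • 1 - ε • (R * diagonal dp + X * diagonal dq)) *ᵥ (v - v') := by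
  have hR := congrArg (R *ᵥ ·) hp
  have hX := congrArg (X *ᵥ ·) hq
  simp only [mulVec_sub, mulVec_neg, mulVec_mulVec] at hR hX
  simp only [voltageStep, sub_mulVec, add_mulVec, smul_mulVec, one_mulVec, mulVec_sub]
  linear_combination (norm := module) ε • hR + ε • hX

theorem contractingWith_voltageStep {S : Matrix n n ℝ} (hS : S.PosDef) (hSR : S * S = R)
    {Lp Lq α : ℝ} (hγd : ∀ i, Differentiable ℝ (γ i)) (hξd : ∀ i, Differentiable ℝ (ξ i))
    (hγ : ∀ i x, deriv (γ i) x ∈ Icc (-Lp) 0) (hξ : ∀ i x, deriv (ξ i) x ∈ Icc (-Lq) 0)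
    (hLp : 0 ≤ Lp) (hLq : 0 ≤ Lq) (hα : 0 ≤ α) (hε : 0 < ε)
    (hlt : relaxationFactor ε ((Lp + α * Lq) * ‖R‖)
      + ε * (‖S‖ * ‖S⁻¹‖ * Lq * ‖X - α • R‖) < 1) :
    ContractingWith (relaxationFactor ε ((Lp + α * Lq) * ‖R‖)
        + ε * (‖S‖ * ‖S⁻¹‖ * Lq * ‖X - α • R‖)).toNNReal
      ((euclideanMulVecEquiv S hS.isUnit).symm ∘ voltageStep R X vhat γ ξ ε
        ∘ euclideanMulVecEquiv S hS.isUnit) := by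
  refine ⟨Real.toNNReal_lt_one.2 hlt, LipschitzWith.of_dist_le_mul fun m m' ↦ ?_⟩
  set e := euclideanMulVecEquiv S hS.isUnit
  obtain ⟨dp, hdp, hp⟩ := exists_diagonal_sub_eq hγd hγ (e m) (e m')
  obtain ⟨dq, hdq, hq⟩ := exists_diagonal_sub_eq hξd hξ (e m) (e m')
  have hbound := norm_conj_linearization_le (X := X) hS.isHermitian hS.isUnit hSR hLp hLq hα
    hdp hdq hε
  rw [dist_eq_norm, dist_eq_norm, Real.coe_toNNReal _ ((norm_nonneg _).trans hbound)]
  exact (norm_euclideanMulVecEquiv_symm_sub_le S _ hS.isUnit (voltageStep_sub hp hq)).trans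
    (mul_le_mul_of_nonneg_right hbound (norm_nonneg _))

end Voltage

theorem opNorm_eq_norm {C : ℕ} (A : Matrix (Fin C) (Fin C) ℝ) : opNorm A = ‖A‖ := rfl

theorem condNumber_eq {C : ℕ} (A : Matrix (Fin C) (Fin C) ℝ) :
    condNumber A = ‖A‖ * ‖A⁻¹‖ := rfl

theorem unique_globally_asymptotically_stable_equilibrium_general
    {C : ℕ} (hC : 1 ≤ C)
    (R X : Matrix (Fin C) (Fin C) ℝ)
    (Rhalf : Matrix (Fin C) (Fin C) ℝ) (hRhalfPD : Rhalf.PosDef)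
    (hRhalfSq : Rhalf * Rhalf = R)
    (vhat : Fin C → ℝ) (γ ξ : Fin C → ℝ → ℝ) (Lp Lq : ℝ)
    (hγd : ∀ n, Differentiable ℝ (γ n)) (hξd : ∀ n, Differentiable ℝ (ξ n))
    (hγ : ∀ n v, -Lp ≤ deriv (γ n) v ∧ deriv (γ n) v ≤ 0)
    (hξ : ∀ n v, -Lq ≤ deriv (ξ n) v ∧ deriv (ξ n) v ≤ 0)
    (α : ℝ) (hα : 0 ≤ α) (ε : ℝ)
    (hLq : Lq < 1 / (condNumber Rhalf * opNorm (X - α • R)))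
    (hε0 : 0 < ε)
    (hε1 : ε < min 1 (2 / (1 + condNumber Rhalf * Lq * opNorm (X - α • R)
        + (Lp + α * Lq) * opNorm R))) :
    ∃ pstar qstar : Fin C → ℝ,
      -- (p*, q*) is an equilibrium point of the dynamics
      (∀ n, pstar n = (1 - ε) * pstar n
          + ε * γ n ((R.mulVec pstar + X.mulVec qstar + vhat) n)) ∧
      (∀ n, qstar n = (1 - ε) * qstar n
          + ε * ξ n ((R.mulVec pstar + X.mulVec qstar + vhat) n)) ∧
      -- the equilibrium is unique
      (∀ p' q' : Fin C → ℝ,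
        (∀ n, p' n = (1 - ε) * p' n
            + ε * γ n ((R.mulVec p' + X.mulVec q' + vhat) n)) →
        (∀ n, q' n = (1 - ε) * q' n
            + ε * ξ n ((R.mulVec p' + X.mulVec q' + vhat) n)) →
        p' = pstar ∧ q' = qstar) ∧
      -- every trajectory of the dynamics converges to (p*, q*)
      (∀ p q : ℕ → Fin C → ℝ,
        (∀ t n, p (t + 1) n = (1 - ε) * p t n
            + ε * γ n ((R.mulVec (p t) + X.mulVec (q t) + vhat) n)) →
        (∀ t n, q (t + 1) n = (1 - ε) * q t n
            + ε * ξ n ((R.mulVec (p t) + X.mulVec (q t) + vhat) n)) →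
        Tendsto p atTop (𝓝 pstar) ∧ Tendsto q atTop (𝓝 qstar)) := by
  have hLp0 : 0 ≤ Lp := neg_nonpos.1 ((hγ ⟨0, hC⟩ 0).1.trans (hγ ⟨0, hC⟩ 0).2)
  have hLq0 : 0 ≤ Lq := neg_nonpos.1 ((hξ ⟨0, hC⟩ 0).1.trans (hξ ⟨0, hC⟩ 0).2)
  simp only [condNumber_eq, opNorm_eq_norm] at hLq hε1
  obtain ⟨v, hv, huniq, hconv⟩ := exists_isFixedPt_tendsto_of_conj _
    (continuous_euclideanMulVecEquiv _ _) (contractingWith_voltageStep (X := X) (vhat := vhat)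
      hRhalfPD hRhalfSq hγd hξd hγ hξ hLp0 hLq0 hα hε0 (relaxationFactor_add_mul_lt_one
        (by positivity) hε0 hLq (hε1.trans_le (min_le_right _ _))))
  have hvolt := (voltageStep_eq_self_iff hε0.ne').1 hv
  refine ⟨_, _, fun i ↦ by rw [hvolt]; ring, fun i ↦ by rw [hvolt]; ring,
    fun p' q' hp' hq' ↦ ?_, fun p q hp hq ↦ ?_⟩
  · have hp'' := eq_of_eq_one_sub_smul_add_smul hε0.ne' (funext hp')
    have hq'' := eq_of_eq_one_sub_smul_add_smul hε0.ne' (funext hq')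
    have hv' := huniq _ ((voltageStep_eq_self_iff hε0.ne').2 (by rw [← hp'', ← hq'']))
    exact ⟨hp''.trans (by rw [hv']), hq''.trans (by rw [hv'])⟩
  · have hV := hconv (fun t ↦ R *ᵥ p t + X *ᵥ q t + vhat) fun t ↦
      voltageStep_mulVec_add_mulVec_add (funext (hp t)) (funext (hq t))
    have hε : |1 - ε| < 1 := abs_sub_lt_iff.2 ⟨by linarith, by linarith [lt_min_iff.1 hε1]⟩
    exact ⟨tendsto_of_relaxation_comp (fun i ↦ (hγd i).continuous) hε hp hV,
      tendsto_of_relaxation_comp (fun i ↦ (hξd i).continuous) hε hq hV⟩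

/-- Global asymptotic stability of the incremental DER control strategy:
under the slope conditions on the equilibrium functions and the bounds on `L_q` and `ε`,
the closed-loop system has a unique equilibrium point, which is globally attractive. -/
theorem unique_globally_asymptotically_stable_equilibrium
    {C : ℕ} (hC : 1 ≤ C)
    (R X : Matrix (Fin C) (Fin C) ℝ) (hR : R.PosDef) (hX : X.PosDef)
    (Rhalf : Matrix (Fin C) (Fin C) ℝ) (hRhalfPD : Rhalf.PosDef)
    (hRhalfSq : Rhalf * Rhalf = R)
    (vhat : Fin C → ℝ) (γ ξ : Fin C → ℝ → ℝ) (Lp Lq : ℝ)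
    (hγd : ∀ n, Differentiable ℝ (γ n)) (hξd : ∀ n, Differentiable ℝ (ξ n))
    (hγ : ∀ n v, -Lp ≤ deriv (γ n) v ∧ deriv (γ n) v ≤ 0)
    (hξ : ∀ n v, -Lq ≤ deriv (ξ n) v ∧ deriv (ξ n) v ≤ 0)
    (α : ℝ) (hα : 0 ≤ α) (ε : ℝ)
    (hLq : Lq < 1 / (condNumber Rhalf * opNorm (X - α • R)))
    (hε0 : 0 < ε)
    (hε1 : ε < min 1 (2 / (1 + condNumber Rhalf * Lq * opNorm (X - α • R)
        + (Lp + α * Lq) * opNorm R))) :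
    ∃ pstar qstar : Fin C → ℝ,
      -- (p*, q*) is an equilibrium point of the dynamics
      (∀ n, pstar n = (1 - ε) * pstar n
          + ε * γ n ((R.mulVec pstar + X.mulVec qstar + vhat) n)) ∧
      (∀ n, qstar n = (1 - ε) * qstar n
          + ε * ξ n ((R.mulVec pstar + X.mulVec qstar + vhat) n)) ∧
      -- the equilibrium is unique
      (∀ p' q' : Fin C → ℝ,
        (∀ n, p' n = (1 - ε) * p' n
            + ε * γ n ((R.mulVec p' + X.mulVec q' + vhat) n)) →
        (∀ n, q' n = (1 - ε) * q' n
            + ε * ξ n ((R.mulVec p' + X.mulVec q' + vhat) n)) →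
        p' = pstar ∧ q' = qstar) ∧
      -- every trajectory of the dynamics converges to (p*, q*)
      (∀ p q : ℕ → Fin C → ℝ,
        (∀ t n, p (t + 1) n = (1 - ε) * p t n
            + ε * γ n ((R.mulVec (p t) + X.mulVec (q t) + vhat) n)) →
        (∀ t n, q (t + 1) n = (1 - ε) * q t n
            + ε * ξ n ((R.mulVec (p t) + X.mulVec (q t) + vhat) n)) →
        Tendsto p atTop (𝓝 pstar) ∧ Tendsto q atTop (𝓝 qstar)) :=
  unique_globally_asymptotically_stable_equilibrium_general hC R X Rhalf hRhalfPD hRhalfSq vhat γ ξ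
    Lp Lq hγd hξd hγ hξ α hα ε hLq hε0 hε1
end

section
/- Let C ≥ 1 and let R, X ∈ ℝ^{C×C} with R symmetric positive definite; fix α ≥ 0 and set X̂ := X − αR. For each bus n, define the single-layer neural network functions γ_n(v, p_L, q_L) = Σ_{h=1}^{H} w_{p}^{(h)} tanh(a^{(h)} v + b^{(h)} p_L + c^{(h)} q_L + d^{(h)}) + e_p and ξ_n(v, p_L, q_L) = Σ_{h=1}^{H} w_{q}^{(h)} tanh(a^{(h)} v + b^{(h)} p_L + c^{(h)} q_L + d^{(h)}) + e_q. If a^{(h)} ≥ 0, w_p^{(h)} ≤ 0, and w_q^{(h)} ≤ 0 for all h ∈ {1,…,H}, and Σ_{h=1}^{H} |w_q^{(h)} a^{(h)}| ≤ 1/(κ(R^{1/2})·‖X̂‖), then for all inputs: (i) ∂γ_n/∂v ≤ 0 and ∂ξ_n/∂v ≤ 0, and (ii) |∂ξ_n/∂v| ≤ 1/(κ(R^{1/2})·‖X̂‖). -/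
open Matrix

/-!
The `v`-slope of a tanh layer `∑ₕ wₕ tanh(aₕ v + …) + e` is `∑ₕ wₕ aₕ sech²(aₕ v + …)`.
Since `0 < sech² ≤ 1`, each term has the sign of `wₕ aₕ` and modulus at most `|wₕ aₕ|`;
so the sign conditions give monotonicity and `∑ₕ |w_q⁽ʰ⁾ a⁽ʰ⁾|` bounds the slope of `ξ`.
-/

open Real

theorem Real.hasDerivAt_tanh (x : ℝ) : HasDerivAt tanh (1 / cosh x ^ 2) x := by
  have hquot := (hasDerivAt_sinh x).div (hasDerivAt_cosh x) (cosh_pos x).ne'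
  have htanh : sinh / cosh = tanh := funext fun y => (tanh_eq_sinh_div_cosh y).symm
  rwa [htanh, ← sq, ← sq, cosh_sq_sub_sinh_sq] at hquot

section TanhLayer

variable {ι : Type*} [Fintype ι]

theorem hasDerivAt_tanh_layer (w a : ι → ℝ) (e : ℝ) {z : ι → ℝ → ℝ} {v : ℝ}
    (hz : ∀ h, HasDerivAt (z h) (a h) v) :
    HasDerivAt (fun u => ∑ h, w h * tanh (z h u) + e)
      (∑ h, w h * (a h / cosh (z h v) ^ 2)) v := by
  refine (HasDerivAt.fun_sum fun h _ => ?_).add_const e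
  exact (((hasDerivAt_tanh _).comp v (hz h)).const_mul (w h)).congr_deriv (by ring)

theorem tanh_layer_slope_nonpos {w a : ι → ℝ} (hw : ∀ h, w h ≤ 0) (ha : ∀ h, 0 ≤ a h)
    (x : ι → ℝ) : ∑ h, w h * (a h / cosh (x h) ^ 2) ≤ 0 :=
  Finset.sum_nonpos fun h _ => mul_nonpos_of_nonpos_of_nonneg (hw h) (by positivity [ha h])

theorem abs_tanh_layer_slope_le (w a x : ι → ℝ) :
    |∑ h, w h * (a h / cosh (x h) ^ 2)| ≤ ∑ h, |w h * a h| := by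
  refine (Finset.abs_sum_le_sum_abs _ _).trans (Finset.sum_le_sum fun h _ => ?_)
  have hcosh : 1 ≤ cosh (x h) ^ 2 := one_le_pow₀ (one_le_cosh _)
  rw [← mul_div_assoc, abs_div, abs_of_pos (by positivity : 0 < cosh (x h) ^ 2)]
  exact div_le_self (abs_nonneg _) hcosh

end TanhLayer

theorem nn_parameter_conditions_general
    {C H : ℕ}
    (R X : Matrix (Fin C) (Fin C) ℝ)
    (Rhalf : Matrix (Fin C) (Fin C) ℝ)
    (α : ℝ)
    (wp wq a b c d : Fin H → ℝ) (ep eq' : ℝ)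
    (ha : ∀ h, 0 ≤ a h) (hwp : ∀ h, wp h ≤ 0) (hwq : ∀ h, wq h ≤ 0)
    (hsum : ∑ h, |wq h * a h| ≤ 1 / (condNumber Rhalf * opNorm (X - α • R))) :
    ∀ v pL qL : ℝ,
      deriv (fun u => ∑ h, wp h * Real.tanh (a h * u + b h * pL + c h * qL + d h) + ep) v
        ≤ 0 ∧
      deriv (fun u => ∑ h, wq h * Real.tanh (a h * u + b h * pL + c h * qL + d h) + eq') v
        ≤ 0 ∧
      |deriv (fun u => ∑ h, wq h * Real.tanh (a h * u + b h * pL + c h * qL + d h) + eq') v|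
        ≤ 1 / (condNumber Rhalf * opNorm (X - α • R)) := by
  intro v pL qL
  have hpre : ∀ h, HasDerivAt (fun u => a h * u + b h * pL + c h * qL + d h) (a h) v := fun h => by
    simpa using (((hasDerivAt_id v).const_mul (a h)).add_const (b h * pL)).add_const (c h * qL)
      |>.add_const (d h)
  rw [(hasDerivAt_tanh_layer wp a ep hpre).deriv, (hasDerivAt_tanh_layer wq a eq' hpre).deriv]
  exact ⟨tanh_layer_slope_nonpos hwp ha _, tanh_layer_slope_nonpos hwq ha _,
    (abs_tanh_layer_slope_le _ _ _).trans hsum⟩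

/-- Conditions on single-layer neural network parameters ensuring the monotonicity
requirement and the slope bound on the learned equilibrium functions. -/
theorem nn_parameter_conditions
    {C H : ℕ} (hC : 1 ≤ C)
    (R X : Matrix (Fin C) (Fin C) ℝ) (hR : R.PosDef)
    (Rhalf : Matrix (Fin C) (Fin C) ℝ) (hRhalfPD : Rhalf.PosDef)
    (hRhalfSq : Rhalf * Rhalf = R)
    (α : ℝ) (hα : 0 ≤ α)
    (wp wq a b c d : Fin H → ℝ) (ep eq' : ℝ)
    (ha : ∀ h, 0 ≤ a h) (hwp : ∀ h, wp h ≤ 0) (hwq : ∀ h, wq h ≤ 0)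
    (hsum : ∑ h, |wq h * a h| ≤ 1 / (condNumber Rhalf * opNorm (X - α • R))) :
    ∀ v pL qL : ℝ,
      deriv (fun u => ∑ h, wp h * Real.tanh (a h * u + b h * pL + c h * qL + d h) + ep) v
        ≤ 0 ∧
      deriv (fun u => ∑ h, wq h * Real.tanh (a h * u + b h * pL + c h * qL + d h) + eq') v
        ≤ 0 ∧
      |deriv (fun u => ∑ h, wq h * Real.tanh (a h * u + b h * pL + c h * qL + d h) + eq') v|
        ≤ 1 / (condNumber Rhalf * opNorm (X - α • R)) :=
  nn_parameter_conditions_general R X Rhalf α wp wq a b c d ep eq' ha hwp hwq hsum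
end

section
/- Let C ≥ 1, R, X ∈ ℝ^{C×C}, v̂ ∈ ℝ^C, ε ∈ ℝ, and for each n let γ_n, ξ_n : ℝ → ℝ be differentiable with −L_p ≤ γ_n' ≤ 0 and −L_q ≤ ξ_n' ≤ 0. Let (p, q) and (p', q') be two trajectories of the dynamics p_n(t+1) = (1−ε)p_n(t) + ε γ_n(v_n(t)), q_n(t+1) = (1−ε)q_n(t) + ε ξ_n(v_n(t)), v(t) = R p(t) + X q(t) + v̂ (and analogously for the primed trajectory). Then for every t there exist diagonal matrices P(t), Q(t) ∈ ℝ^{C×C} with diagonal entries in [−L_p, 0] and [−L_q, 0] respectively, such that v(t+1) − v'(t+1) = [(1−ε)I + ε R P(t) + ε X Q(t)] (v(t) − v'(t)). -/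
open Matrix

lemma secant_exists (f : ℝ → ℝ) (a b : ℝ) (hf : Differentiable ℝ f)
    (hb : ∀ x, a ≤ deriv f x ∧ deriv f x ≤ b) (u w : ℝ) :
    ∃ d, a ≤ d ∧ d ≤ b ∧ f u - f w = d * (u - w) := by
  rcases lt_trichotomy u w with h | h | h
  · obtain ⟨c, _, hc⟩ := exists_deriv_eq_slope f h hf.continuous.continuousOn
      (fun x _ => hf.differentiableAt.differentiableWithinAt)
    refine ⟨deriv f c, (hb c).1, (hb c).2, ?_⟩
    have hne : w - u ≠ 0 := by linarith
    field_simp at hc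
    nlinarith [hc]
  · exact ⟨deriv f u, (hb u).1, (hb u).2, by simp [h]⟩
  · obtain ⟨c, _, hc⟩ := exists_deriv_eq_slope f h hf.continuous.continuousOn
      (fun x _ => hf.differentiableAt.differentiableWithinAt)
    refine ⟨deriv f c, (hb c).1, (hb c).2, ?_⟩
    have hne : u - w ≠ 0 := by linarith
    field_simp at hc
    nlinarith [hc]

/-- The difference of the voltage trajectories of two solutions of the incremental
control dynamics evolves through state-transition matrices
`(1-ε)I + ε R P(t) + ε X Q(t)`, where `P(t)` and `Q(t)` are diagonal secant matrices
whose entries lie in `[-L_p, 0]` and `[-L_q, 0]` respectively. -/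
theorem voltage_difference_transition
    {C : ℕ}
    (R X : Matrix (Fin C) (Fin C) ℝ) (vhat : Fin C → ℝ) (ε : ℝ)
    (γ ξ : Fin C → ℝ → ℝ) (Lp Lq : ℝ)
    (hγd : ∀ n, Differentiable ℝ (γ n)) (hξd : ∀ n, Differentiable ℝ (ξ n))
    (hγ : ∀ n x, -Lp ≤ deriv (γ n) x ∧ deriv (γ n) x ≤ 0)
    (hξ : ∀ n x, -Lq ≤ deriv (ξ n) x ∧ deriv (ξ n) x ≤ 0)
    (p q p' q' : ℕ → Fin C → ℝ)
    (hp : ∀ t n, p (t + 1) n = (1 - ε) * p t n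
        + ε * γ n ((R.mulVec (p t) + X.mulVec (q t) + vhat) n))
    (hq : ∀ t n, q (t + 1) n = (1 - ε) * q t n
        + ε * ξ n ((R.mulVec (p t) + X.mulVec (q t) + vhat) n))
    (hp' : ∀ t n, p' (t + 1) n = (1 - ε) * p' t n
        + ε * γ n ((R.mulVec (p' t) + X.mulVec (q' t) + vhat) n))
    (hq' : ∀ t n, q' (t + 1) n = (1 - ε) * q' t n
        + ε * ξ n ((R.mulVec (p' t) + X.mulVec (q' t) + vhat) n)) :
    ∀ t, ∃ dP dQ : Fin C → ℝ,
      (∀ n, -Lp ≤ dP n ∧ dP n ≤ 0) ∧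
      (∀ n, -Lq ≤ dQ n ∧ dQ n ≤ 0) ∧
      (R.mulVec (p (t + 1)) + X.mulVec (q (t + 1)) + vhat)
          - (R.mulVec (p' (t + 1)) + X.mulVec (q' (t + 1)) + vhat)
        = ((1 - ε) • (1 : Matrix (Fin C) (Fin C) ℝ)
            + ε • (R * Matrix.diagonal dP) + ε • (X * Matrix.diagonal dQ)).mulVec
            ((R.mulVec (p t) + X.mulVec (q t) + vhat)
              - (R.mulVec (p' t) + X.mulVec (q' t) + vhat)) := by
  intro t
  set v : Fin C → ℝ := R.mulVec (p t) + X.mulVec (q t) + vhat with hv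
  set v' : Fin C → ℝ := R.mulVec (p' t) + X.mulVec (q' t) + vhat with hv'
  have hP := fun n => secant_exists (γ n) (-Lp) 0 (hγd n) (hγ n) (v n) (v' n)
  have hQ := fun n => secant_exists (ξ n) (-Lq) 0 (hξd n) (hξ n) (v n) (v' n)
  choose dP hP1 hP2 hP3 using hP
  choose dQ hQ1 hQ2 hQ3 using hQ
  refine ⟨dP, dQ, fun n => ⟨hP1 n, hP2 n⟩, fun n => ⟨hQ1 n, hQ2 n⟩, ?_⟩
  have hw : v - v' = R.mulVec (p t - p' t) + X.mulVec (q t - q' t) := by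
    rw [hv, hv', mulVec_sub, mulVec_sub]; funext k; simp; ring
  have hΔp : p (t + 1) - p' (t + 1)
      = (1 - ε) • (p t - p' t) + ε • fun n => dP n * (v n - v' n) := by
    funext n
    simp only [Pi.sub_apply, Pi.add_apply, Pi.smul_apply, smul_eq_mul]
    rw [hp, hp']
    linear_combination ε * hP3 n
  have hΔq : q (t + 1) - q' (t + 1)
      = (1 - ε) • (q t - q' t) + ε • fun n => dQ n * (v n - v' n) := by
    funext n
    simp only [Pi.sub_apply, Pi.add_apply, Pi.smul_apply, smul_eq_mul]
    rw [hq, hq']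
    linear_combination ε * hQ3 n
  have hdP : (R * Matrix.diagonal dP).mulVec (v - v')
      = R.mulVec fun n => dP n * (v n - v' n) := by
    have : (Matrix.diagonal dP).mulVec (v - v') = fun n => dP n * (v n - v' n) := by
      funext n; rw [mulVec_diagonal]; simp
    rw [← mulVec_mulVec, this]
  have hdQ : (X * Matrix.diagonal dQ).mulVec (v - v')
      = X.mulVec fun n => dQ n * (v n - v' n) := by
    have : (Matrix.diagonal dQ).mulVec (v - v') = fun n => dQ n * (v n - v' n) := by
      funext n; rw [mulVec_diagonal]; simp
    rw [← mulVec_mulVec, this]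
  calc (R.mulVec (p (t + 1)) + X.mulVec (q (t + 1)) + vhat)
          - (R.mulVec (p' (t + 1)) + X.mulVec (q' (t + 1)) + vhat)
      = R.mulVec (p (t + 1) - p' (t + 1)) + X.mulVec (q (t + 1) - q' (t + 1)) := by
        rw [mulVec_sub, mulVec_sub]; funext k; simp; ring
    _ = (1 - ε) • (R.mulVec (p t - p' t) + X.mulVec (q t - q' t))
        + ε • R.mulVec (fun n => dP n * (v n - v' n))
        + ε • X.mulVec (fun n => dQ n * (v n - v' n)) := by
        rw [hΔp, hΔq, mulVec_add, mulVec_add, mulVec_smul, mulVec_smul, mulVec_smul,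
          mulVec_smul, smul_add]
        abel
    _ = ((1 - ε) • (1 : Matrix (Fin C) (Fin C) ℝ)
            + ε • (R * Matrix.diagonal dP) + ε • (X * Matrix.diagonal dQ)).mulVec (v - v') := by
        rw [add_mulVec, add_mulVec, smul_mulVec, smul_mulVec, smul_mulVec,
          one_mulVec, hdP, hdQ, hw]
end
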